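/- arXiv:1301.1165 — 7 statements merged into one kernel-verified Lean document; each statement's English description precedes it below -/
import Mathlib

section
/- Let k ≥ 1 be an integer and p ∈ [0,1] with k²·p·(1−p) < 1. Then the sequence a_n = 2·(k+1)·k^(n−1)·(p(1−p))^⌊n/2⌋ tends to 0 as n → ∞. (This is the upper bound on the probability of a zebra-path of length n from the root, showing the zebra-percolation function vanishes in this regime.) -/
theorem zebra_upper_bound_tendsto_zero (k : ℕ) (hk : 1 ≤ k) (p : ℝ)
    (hp0 : 0 ≤ p) (hp1 : p ≤ 1) (h : (k : ℝ) ^ 2 * p * (1 - p) < 1) :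
    Filter.Tendsto
      (fun n : ℕ => 2 * ((k : ℝ) + 1) * (k : ℝ) ^ (n - 1) * (p * (1 - p)) ^ (n / 2))
      Filter.atTop (nhds 0) := by
  have hk1 : (1 : ℝ) ≤ (k : ℝ) := by exact_mod_cast hk
  have hk0 : (0 : ℝ) ≤ (k : ℝ) := by linarith
  have hq0 : 0 ≤ p * (1 - p) := mul_nonneg hp0 (by linarith)
  have hr0 : 0 ≤ (k : ℝ) ^ 2 * (p * (1 - p)) := mul_nonneg (by positivity) hq0
  have hr1 : (k : ℝ) ^ 2 * (p * (1 - p)) < 1 := by nlinarith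
  have htend : Filter.Tendsto
      (fun n : ℕ => 2 * ((k : ℝ) + 1) * (k : ℝ) *
        ((k : ℝ) ^ 2 * (p * (1 - p))) ^ (n / 2)) Filter.atTop (nhds 0) := by
    have h1 : Filter.Tendsto (fun m : ℕ => ((k : ℝ) ^ 2 * (p * (1 - p))) ^ m)
        Filter.atTop (nhds 0) := tendsto_pow_atTop_nhds_zero_of_lt_one hr0 hr1
    have h2 : Filter.Tendsto (fun n : ℕ => n / 2) Filter.atTop Filter.atTop :=
      Filter.tendsto_atTop_atTop.2 (fun b => ⟨2 * b, fun n hn => by omega⟩)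
    have := (h1.comp h2).const_mul (2 * ((k : ℝ) + 1) * (k : ℝ))
    simpa using this
  apply squeeze_zero (fun n => by positivity) _ htend
  intro n
  have hpow : (k : ℝ) ^ (n - 1) ≤ (k : ℝ) ^ (2 * (n / 2) + 1) :=
    pow_le_pow_right₀ hk1 (by omega)
  calc 2 * ((k : ℝ) + 1) * (k : ℝ) ^ (n - 1) * (p * (1 - p)) ^ (n / 2)
      ≤ 2 * ((k : ℝ) + 1) * (k : ℝ) ^ (2 * (n / 2) + 1) * (p * (1 - p)) ^ (n / 2) := by
        apply mul_le_mul_of_nonneg_right _ (pow_nonneg hq0 _)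
        apply mul_le_mul_of_nonneg_left hpow (by positivity)
    _ = 2 * ((k : ℝ) + 1) * (k : ℝ) * ((k : ℝ) ^ 2 * (p * (1 - p))) ^ (n / 2) := by
        conv_rhs => rw [mul_pow, ← pow_mul]
        ring
end

section
/- Let k ≥ 1 be an integer and p ∈ (0,1) with k²·p·(1−p) > 1. Define 𝒫_m = 2·(p(1−p))^(m/2) if m is even and 𝒫_m = (p(1−p))^((m−1)/2) if m is odd, and set w_0 = 1, w_m = (k+1)·k^(m−1) for m ≥ 1. Then the series ∑_{m=0}^∞ 1/(𝒫_m · w_m) converges. -/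
theorem zebra_second_moment_series_summable (k : ℕ) (hk : 1 ≤ k) (p : ℝ)
    (hp0 : 0 < p) (hp1 : p < 1) (h : 1 < (k : ℝ) ^ 2 * p * (1 - p)) :
    Summable (fun m : ℕ =>
      1 / ((if m % 2 = 0 then 2 * (p * (1 - p)) ^ (m / 2)
            else (p * (1 - p)) ^ ((m - 1) / 2)) *
           (if m = 0 then 1 else ((k : ℝ) + 1) * (k : ℝ) ^ (m - 1)))) := by
  set r : ℝ := p * (1 - p) with hr
  have hr0 : 0 < r := mul_pos hp0 (by linarith)
  have hk1 : (1:ℝ) ≤ (k:ℝ) := by exact_mod_cast hk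
  have hk0 : (0:ℝ) < (k:ℝ) := by linarith
  have hb : 1 < (k:ℝ)^2 * r := by rw [hr]; nlinarith [h]
  have hb0 : 0 < (k:ℝ)^2 * r := by positivity
  set a : ℝ := ((k:ℝ)^2 * r)⁻¹ with ha
  have ha0 : (0:ℝ) ≤ a := by positivity
  have ha1 : a < 1 := by rw [ha]; exact inv_lt_one_of_one_lt₀ hb
  have hgeo : Summable (fun n : ℕ => a ^ n) := summable_geometric_of_lt_one ha0 ha1
  have hpow : ∀ n : ℕ, a ^ n = (((k:ℝ)^2 * r) ^ n)⁻¹ := by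
    intro n; rw [ha, inv_pow]
  apply Summable.even_add_odd
  · -- even part
    apply Summable.of_nonneg_of_le _ _ hgeo
    · intro n
      positivity
    · intro n
      have h2 : (2*n) % 2 = 0 := Nat.mul_mod_right 2 n
      have h3 : (2*n) / 2 = n := Nat.mul_div_cancel_left n (by norm_num)
      simp only [h2, h3, if_pos rfl]
      rcases n with _ | n
      · norm_num
      · have hne : 2 * (n+1) ≠ 0 := by omega
        rw [if_neg hne]
        have hidx : 2 * (n+1) - 1 = 2*n+1 := by omega
        rw [hidx, hpow]
        have key : ((k:ℝ)^2 * r) ^ (n+1) ≤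
            2 * r ^ (n+1) * (((k:ℝ) + 1) * (k:ℝ) ^ (2*n+1)) := by
          calc ((k:ℝ)^2 * r) ^ (n+1) = (k:ℝ)^(2*(n+1)) * r^(n+1) := by
                rw [mul_pow, ← pow_mul]
            _ = ((k:ℝ) * (k:ℝ)^(2*n+1)) * r^(n+1) := by
                rw [show 2*(n+1) = (2*n+1)+1 from by ring, pow_succ]; ring
            _ ≤ ((2 * ((k:ℝ)+1)) * (k:ℝ)^(2*n+1)) * r^(n+1) := by
                have : (k:ℝ) ≤ 2 * ((k:ℝ)+1) := by linarith
                gcongr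
            _ = 2 * r ^ (n+1) * (((k:ℝ) + 1) * (k:ℝ) ^ (2*n+1)) := by ring
        have hEpos : 0 < ((k:ℝ)^2 * r) ^ (n+1) := by positivity
        calc 1 / (2 * r ^ (n+1) * (((k:ℝ) + 1) * (k:ℝ) ^ (2*n+1)))
            ≤ 1 / (((k:ℝ)^2 * r) ^ (n+1)) := one_div_le_one_div_of_le hEpos key
          _ = (((k:ℝ)^2 * r) ^ (n+1))⁻¹ := one_div _
  · -- odd part
    apply Summable.of_nonneg_of_le _ _ hgeo
    · intro n
      positivity
    · intro n
      have h2 : (2*n+1) % 2 = 1 := by omega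
      have hne : 2*n+1 ≠ 0 := by omega
      have h3 : (2*n+1-1) / 2 = n := by omega
      have h4 : 2*n+1-1 = 2*n := by omega
      rw [if_neg (by omega : ¬ (2*n+1) % 2 = 0), if_neg hne, h3, h4, hpow]
      have key : ((k:ℝ)^2 * r) ^ n ≤ r ^ n * (((k:ℝ) + 1) * (k:ℝ) ^ (2*n)) := by
        calc ((k:ℝ)^2 * r) ^ n = (k:ℝ)^(2*n) * r^n := by rw [mul_pow, ← pow_mul]
          _ ≤ (((k:ℝ)+1) * (k:ℝ)^(2*n)) * r^n := by
              have h1 : (1:ℝ) ≤ (k:ℝ)+1 := by linarith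
              nlinarith [pow_pos hk0 (2*n), pow_pos hr0 n,
                mul_le_mul_of_nonneg_right
                  (le_mul_of_one_le_left (pow_pos hk0 (2*n)).le h1)
                  (pow_pos hr0 n).le]
          _ = r ^ n * (((k:ℝ) + 1) * (k:ℝ) ^ (2*n)) := by ring
      have hEpos : 0 < ((k:ℝ)^2 * r) ^ n := by positivity
      calc 1 / (r ^ n * (((k:ℝ) + 1) * (k:ℝ) ^ (2*n)))
          ≤ 1 / (((k:ℝ)^2 * r) ^ n) := one_div_le_one_div_of_le hEpos key
        _ = (((k:ℝ)^2 * r) ^ n)⁻¹ := one_div _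
end

section
/- Let k ≥ 2 be an integer and p ∈ [0,1] with p ≤ 1/k. Then the function f(x) = 1 − (1 − p·x)^k has a unique fixed point in [0,1], namely x = 0. -/
lemma strict_bernoulli (a : ℝ) (ha : 0 < a) (ha1 : a < 1) :
    ∀ n : ℕ, 2 ≤ n → 1 - (n : ℝ) * a < (1 - a) ^ n := by
  intro n hn
  induction n with
  | zero => omega
  | succ m ih =>
    rcases Nat.lt_or_ge m 2 with h | h
    · interval_cases m
      · omega
      · push_cast
        nlinarith
    · have hm := ih h
      have h1 : (0:ℝ) < 1 - a := by linarith
      have hps : (1 - a) ^ (m + 1) = (1 - a) ^ m * (1 - a) := pow_succ _ _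
      have key := mul_lt_mul_of_pos_right hm h1
      have hm0 : (0:ℝ) ≤ m := Nat.cast_nonneg m
      push_cast
      nlinarith [key, hps, sq_nonneg a, mul_nonneg hm0 (sq_nonneg a)]

theorem subcritical_unique_fixed_point (k : ℕ) (hk : 2 ≤ k) (p : ℝ)
    (hp0 : 0 ≤ p) (hp1 : p ≤ 1) (hpc : p ≤ 1 / (k : ℝ)) :
    ∀ x ∈ Set.Icc (0 : ℝ) 1, (1 - (1 - p * x) ^ k = x ↔ x = 0) := by
  have hk0 : (0:ℝ) < k := by positivity
  have hk2 : (2:ℝ) ≤ k := by exact_mod_cast hk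
  have hkp : (k:ℝ) * p ≤ 1 := by
    rw [div_eq_inv_mul, le_inv_mul_iff₀ hk0] at hpc
    linarith [hpc]
  intro x hx
  obtain ⟨hx0, hx1⟩ := hx
  constructor
  · intro hfix
    by_contra hxne
    have hxpos : 0 < x := lt_of_le_of_ne hx0 (Ne.symm hxne)
    rcases eq_or_lt_of_le hp0 with hp | hp
    · simp [← hp] at hfix
      exact hxne hfix.symm
    · have hapos : 0 < p * x := mul_pos hp hxpos
      have ha1 : p * x < 1 := by nlinarith
      have hb := strict_bernoulli (p * x) hapos ha1 k hk
      nlinarith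
  · intro h
    simp [h]
end

section
/- Let k ≥ 2 be an integer and p ∈ (1/k, 1]. Then the function f(x) = 1 − (1 − p·x)^k has exactly two fixed points in [0,1]: the point 0 and a point θ̂ ∈ (0,1]. -/
lemma sup_fixed_unique (k : ℕ) (hk : 2 ≤ k) (p : ℝ) (hp0 : 0 < p)
    (a b : ℝ) (ha : 0 < a) (hab : a < b) (hpb : p * b ≤ 1)
    (hfa : 1 - (1 - p * a) ^ k = a) (hfb : 1 - (1 - p * b) ^ k = b) : False := by
  have hb0 : 0 < b := ha.trans hab
  set t : ℝ := a / b with ht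
  have ht0 : 0 < t := div_pos ha hb0
  have ht1 : t < 1 := (div_lt_one hb0).2 hab
  have htb : t * b = a := div_mul_cancel₀ a hb0.ne'
  have hu0 : (0:ℝ) ≤ 1 - p * b := by linarith
  have hu1 : 1 - p * b < 1 := by nlinarith
  have key := (strictConvexOn_pow hk).2 (Set.mem_Ici.2 (zero_le_one)) (Set.mem_Ici.2 hu0)
    (by intro h; rw [← h] at hu1; exact lt_irrefl _ hu1)
    (by linarith : (0:ℝ) < 1 - t) ht0 (by ring)
  simp only [smul_eq_mul] at key
  have hcomb : (1 - t) * 1 + t * (1 - p * b) = 1 - p * a := by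
    have : t * (p * b) = p * a := by rw [mul_comm p b, ← mul_assoc, htb, mul_comm]
    nlinarith [this]
  rw [hcomb] at key
  have h1 : (1 - p * a) ^ k = 1 - a := by linarith
  have h2 : (1 - p * b) ^ k = 1 - b := by linarith
  rw [h1, h2, one_pow] at key
  nlinarith [key, htb]

set_option maxHeartbeats 1000000 in
theorem supercritical_two_fixed_points (k : ℕ) (hk : 2 ≤ k) (p : ℝ)
    (hp : p ∈ Set.Ioc (1 / (k : ℝ)) 1) :
    ∃ θ ∈ Set.Ioc (0 : ℝ) 1,
      (∀ x ∈ Set.Icc (0 : ℝ) 1, 1 - (1 - p * x) ^ k = x ↔ (x = 0 ∨ x = θ)) := by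
  obtain ⟨hp1, hp2⟩ := hp
  have hk0 : (0:ℝ) < k := by positivity
  have hp0 : 0 < p := lt_trans (by positivity) hp1
  set c : ℝ := k * p with hc
  have hc1 : 1 < c := by
    rw [div_lt_iff₀ hk0] at hp1; linarith [hp1]
  set x0 : ℝ := (c - 1) / (2 * c) with hx0
  have hc0 : 0 < c := by linarith
  have hx0pos : 0 < x0 := div_pos (by linarith) (by linarith)
  have hx0half : x0 < 1 / 2 := by
    rw [hx0, div_lt_div_iff₀ (by linarith) (by norm_num)]; linarith
  -- y = p * x0
  set y : ℝ := p * x0 with hy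
  have hy0 : 0 < y := by positivity
  have hyx0 : y ≤ x0 := by nlinarith
  have hy1 : y < 1 := by linarith
  have hcx0 : (k:ℝ) * y = c * x0 := by rw [hy, hc]; ring
  have hcx0val : c * x0 = (c - 1) / 2 := by
    rw [hx0]; field_simp
  -- (1-y)^k * (1+y)^k ≤ 1
  have hma : (1 - y) ^ k * (1 + y) ^ k = (1 - y ^ 2) ^ k := by
    rw [← mul_pow]; ring_nf
  have hle1 : (1 - y ^ 2) ^ k ≤ 1 := by
    apply pow_le_one₀ (by nlinarith) (by nlinarith)
  have hbern : 1 + (k:ℝ) * y ≤ (1 + y) ^ k := one_add_mul_le_pow (by linarith) k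
  have hpow0 : 0 ≤ (1 - y) ^ k := pow_nonneg (by linarith) k
  have hkey : (1 - y) ^ k * (1 + (k:ℝ) * y) ≤ 1 := by
    calc (1 - y) ^ k * (1 + (k:ℝ) * y) ≤ (1 - y) ^ k * (1 + y) ^ k :=
          mul_le_mul_of_nonneg_left hbern hpow0
      _ = (1 - y ^ 2) ^ k := hma
      _ ≤ 1 := hle1
  -- g x0 > 0, i.e. (1 - p*x0)^k < 1 - x0
  have hgx0 : (1 - p * x0) ^ k < 1 - x0 := by
    rw [← hy]
    have h1 : 0 < 1 + (k:ℝ) * y := by positivity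
    have h2 : (1 - x0) * (1 + (k:ℝ) * y) > 1 := by
      rw [hcx0]
      nlinarith [hcx0val, hx0pos, hc1, hx0half]
    nlinarith [hkey, hpow0, h1, h2]
  -- g 1 ≤ 0
  have hg1 : 1 - (1 - p * 1) ^ k ≤ 1 := by
    have : 0 ≤ (1 - p * 1) ^ k := pow_nonneg (by linarith) k
    linarith
  -- IVT
  set g : ℝ → ℝ := fun x => 1 - (1 - p * x) ^ k - x with hg
  have hcont : ContinuousOn g (Set.Icc x0 1) := by fun_prop
  have hx01 : x0 ≤ 1 := by linarith
  have hivt := intermediate_value_Icc' hx01 hcont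
  have h0mem : (0:ℝ) ∈ Set.Icc (g 1) (g x0) := by
    constructor
    · simp only [hg]; linarith
    · simp only [hg]; linarith
  obtain ⟨θ, hθmem, hθfix⟩ := hivt h0mem
  have hθ0 : 0 < θ := lt_of_lt_of_le hx0pos hθmem.1
  have hθ1 : θ ≤ 1 := hθmem.2
  have hθfp : 1 - (1 - p * θ) ^ k = θ := by
    simp only [hg] at hθfix; linarith
  refine ⟨θ, ⟨hθ0, hθ1⟩, fun x hx => ?_⟩
  constructor
  · intro hfx
    rcases eq_or_lt_of_le hx.1 with h0 | hxpos
    · exact Or.inl h0.symm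
    · right
      have hpθ : p * θ ≤ 1 := by
        have h' : p * θ ≤ p * 1 := mul_le_mul_of_nonneg_left hθ1 hp0.le
        rw [mul_one] at h'; linarith
      have hpx : p * x ≤ 1 := by
        have h' : p * x ≤ p * 1 := mul_le_mul_of_nonneg_left hx.2 hp0.le
        rw [mul_one] at h'; linarith
      rcases lt_trichotomy x θ with h | h | h
      · exact (sup_fixed_unique k hk p hp0 x θ hxpos h hpθ hfx hθfp).elim
      · exact h
      · exact (sup_fixed_unique k hk p hp0 θ x hθ0 h hpx hθfp hfx).elim
  · rintro (rfl | rfl)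
    · simp
    · exact hθfp
end

section
/- Let k ≥ 2 be an integer and suppose 1/k < p₁ < p₂ ≤ 1. Let x₁, x₂ ∈ (0,1] be the unique points with x₁ = 1 − (1 − p₁·x₁)^k and x₂ = 1 − (1 − p₂·x₂)^k. Then x₁ < x₂. (The percolation function θ̂_k is strictly increasing on (1/k,1].) -/
theorem percolation_function_strict_mono (k : ℕ) (hk : 2 ≤ k)
    (p₁ p₂ : ℝ) (hp₁ : 1 / (k : ℝ) < p₁) (hp₁₂ : p₁ < p₂) (hp₂ : p₂ ≤ 1)
    (x₁ x₂ : ℝ) (hx₁ : x₁ ∈ Set.Ioc (0 : ℝ) 1) (hx₂ : x₂ ∈ Set.Ioc (0 : ℝ) 1)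
    (he₁ : x₁ = 1 - (1 - p₁ * x₁) ^ k) (he₂ : x₂ = 1 - (1 - p₂ * x₂) ^ k) :
    x₁ < x₂ := by
  obtain ⟨hx₁0, hx₁1⟩ := hx₁
  obtain ⟨hx₂0, hx₂1⟩ := hx₂
  by_contra hle
  push_neg at hle
  have hkR : (0:ℝ) < k := by
    have : (2:ℝ) ≤ k := by exact_mod_cast hk
    linarith
  have hp₁0 : 0 < p₁ := lt_trans (by positivity) hp₁
  have hp₁1 : p₁ ≤ 1 := le_of_lt (lt_of_lt_of_le hp₁₂ hp₂)
  -- Step 1: x₂ > 1 - (1 - p₁ x₂)^k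
  have hb : 0 ≤ 1 - p₂ * x₂ := by nlinarith
  have hpow : (1 - p₂ * x₂) ^ k < (1 - p₁ * x₂) ^ k := by
    apply pow_lt_pow_left₀ (by nlinarith) hb (by omega)
  have h1 : 1 - (1 - p₁ * x₂) ^ k < x₂ := by linarith
  -- Step 2: concavity argument
  set t := x₂ / x₁ with ht
  have hx₁ne : x₁ ≠ 0 := ne_of_gt hx₁0
  have ht0 : 0 ≤ t := by positivity
  have ht1 : t ≤ 1 := by rw [ht, div_le_one hx₁0]; exact hle
  have htx : t * x₁ = x₂ := div_mul_cancel₀ x₂ hx₁ne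
  have hconv := (convexOn_pow k).2 (Set.mem_Ici.mpr (by norm_num : (0:ℝ) ≤ 1))
      (Set.mem_Ici.mpr (by nlinarith : (0:ℝ) ≤ 1 - p₁ * x₁))
      (by linarith : (0:ℝ) ≤ 1 - t) ht0 (by ring)
  simp only [smul_eq_mul] at hconv
  have harg : (1 - t) * 1 + t * (1 - p₁ * x₁) = 1 - p₁ * x₂ := by
    rw [← htx]; ring
  rw [harg, one_pow] at hconv
  have hpk : (1 - p₁ * x₁) ^ k = 1 - x₁ := by linarith
  rw [hpk] at hconv
  have : (1 - t) * 1 + t * (1 - x₁) = 1 - x₂ := by rw [← htx]; ring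
  linarith
end

section
/- Let k ≥ 3 be an integer and let p_{c,1} = (k − √(k²−4))/(2k), p_{c,2} = (k + √(k²−4))/(2k). For p ∈ (p_{c,1}, p_{c,2}), let ζ(p) denote the unique x ∈ (0,1] with x = 1 − (1 − p(1−p)·x)^(k²). Then ζ is strictly increasing on (p_{c,1}, 1/2], strictly decreasing on [1/2, p_{c,2}), and attains its maximum at p = 1/2, where ζ(1/2) equals the unique x ∈ (0,1] with x = 1 − (1 − x/4)^(k²). -/
/-!
Put `q = p(1-p)`, so that `ζ p` is a fixed point in `(0,1]` of `x ↦ 1 - (1 - q x)^(k²)`.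
This map is strictly concave with value `0` at `0`, so `x ↦ (1 - (1 - q x)^(k²)) / x` is strictly
decreasing; hence it has at most one fixed point in `(0,1]`, and that fixed point strictly increases
with `q`. Since `p(1-p)` increases on `(p_{c,1}, 1/2]`, decreases on `[1/2, p_{c,2})` and equals
`1/4` at `1/2`, the claims follow.
-/

open Set Function

/-- The survival probability of bond percolation with parameter `q` on the rooted `n`-ary tree is
the largest fixed point of this map. -/
def treeSurvivalMap (n : ℕ) (q x : ℝ) : ℝ := 1 - (1 - q * x) ^ n

section TreeSurvivalMap

variable {n : ℕ} {q q' a b : ℝ}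

lemma treeSurvivalMap_lt_of_lt (hn : n ≠ 0) (ha : 0 < a) (hq : q < q') (hqa : q' * a ≤ 1) :
    treeSurvivalMap n q a < treeSurvivalMap n q' a := by
  have := pow_lt_pow_left₀ (by nlinarith : 1 - q' * a < 1 - q * a) (by linarith) hn
  unfold treeSurvivalMap
  linarith

lemma div_mul_treeSurvivalMap_lt (hn : 2 ≤ n) (hq : 0 < q) (ha : 0 < a) (hab : a < b)
    (hqb : q * b ≤ 1) : a / b * treeSurvivalMap n q b < treeSurvivalMap n q a := by
  have hb : 0 < b := ha.trans hab
  set l := a / b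
  have hl : l < 1 := (div_lt_one hb).2 hab
  have hconvex : (l * (1 - q * b) + (1 - l)) ^ n < l * (1 - q * b) ^ n + (1 - l) := by
    simpa using (strictConvexOn_pow hn).2 (mem_Ici.2 (sub_nonneg.2 hqb)) (mem_Ici.2 zero_le_one)
      (by nlinarith) (div_pos ha hb) (sub_pos.2 hl) (add_sub_cancel l 1)
  have hmix : l * (1 - q * b) + (1 - l) = 1 - q * a := by
    simp only [l]; field_simp; ring
  rw [hmix] at hconvex
  unfold treeSurvivalMap
  linarith

lemma le_of_le_treeSurvivalMap_of_isFixedPt (hn : 2 ≤ n) (hq : 0 < q) (hq1 : q ≤ 1)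
    (ha : 0 < a) (hb : b ≤ 1) (hfix : IsFixedPt (treeSurvivalMap n q) a)
    (hsub : b ≤ treeSurvivalMap n q b) : b ≤ a := by
  by_contra! hab
  have hb0 : 0 < b := ha.trans hab
  have hlt := div_mul_treeSurvivalMap_lt hn hq ha hab (by nlinarith)
  have hle : a ≤ a / b * treeSurvivalMap n q b :=
    calc a = a / b * b := by field_simp
      _ ≤ a / b * treeSurvivalMap n q b := by gcongr
  linarith [hfix.eq]

lemma eq_of_isFixedPt_treeSurvivalMap (hn : 2 ≤ n) (hq : 0 < q) (hq1 : q ≤ 1)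
    (ha : a ∈ Ioc 0 1) (hb : b ∈ Ioc 0 1) (hfa : IsFixedPt (treeSurvivalMap n q) a)
    (hfb : IsFixedPt (treeSurvivalMap n q) b) : a = b :=
  le_antisymm (le_of_le_treeSurvivalMap_of_isFixedPt hn hq hq1 hb.1 ha.2 hfb hfa.eq.ge)
    (le_of_le_treeSurvivalMap_of_isFixedPt hn hq hq1 ha.1 hb.2 hfa hfb.eq.ge)

lemma lt_of_isFixedPt_treeSurvivalMap (hn : 2 ≤ n) (hq : 0 < q) (hqq' : q < q') (hq' : q' ≤ 1)
    (ha : a ∈ Ioc 0 1) (hb : b ∈ Ioc 0 1) (hfa : IsFixedPt (treeSurvivalMap n q) a)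
    (hfb : IsFixedPt (treeSurvivalMap n q') b) : a < b := by
  have hstep : a < treeSurvivalMap n q' a := by
    simpa only [hfa.eq] using
      treeSurvivalMap_lt_of_lt (by omega : n ≠ 0) ha.1 hqq' (by nlinarith [ha.2])
  refine (le_of_le_treeSurvivalMap_of_isFixedPt hn (hq.trans hqq') hq' hb.1 ha.2 hfb
    hstep.le).lt_of_ne ?_
  rintro rfl
  exact hstep.ne hfb.eq.symm

end TreeSurvivalMap

lemma criticalPoints_bounds {c : ℝ} (hc : 2 < c) :
    0 < (c - √(c ^ 2 - 4)) / (2 * c) ∧ (c - √(c ^ 2 - 4)) / (2 * c) < 1 / 2 ∧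
      1 / 2 < (c + √(c ^ 2 - 4)) / (2 * c) ∧ (c + √(c ^ 2 - 4)) / (2 * c) < 1 := by
  have hs0 : 0 < √(c ^ 2 - 4) := Real.sqrt_pos.2 (by nlinarith)
  have hsc : √(c ^ 2 - 4) < c := (Real.sqrt_lt' (by linarith)).2 (by linarith)
  have hc0 : 0 < 2 * c := by linarith
  refine ⟨div_pos (by linarith) hc0, ?_, ?_, ?_⟩
  · rw [div_lt_iff₀ hc0]; linarith
  · rw [lt_div_iff₀ hc0]; linarith
  · rw [div_lt_one hc0]; linarith

theorem zebra_percolation_monotonicity (k : ℕ) (hk : 3 ≤ k)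
    (ζ : ℝ → ℝ)
    (hζ : ∀ p ∈ Set.Ioo (((k : ℝ) - Real.sqrt ((k : ℝ) ^ 2 - 4)) / (2 * k))
                        (((k : ℝ) + Real.sqrt ((k : ℝ) ^ 2 - 4)) / (2 * k)),
      ζ p ∈ Set.Ioc (0 : ℝ) 1 ∧ ζ p = 1 - (1 - p * (1 - p) * ζ p) ^ (k ^ 2)) :
    StrictMonoOn ζ (Set.Ioc (((k : ℝ) - Real.sqrt ((k : ℝ) ^ 2 - 4)) / (2 * k)) (1 / 2)) ∧
    StrictAntiOn ζ (Set.Ico (1 / 2) (((k : ℝ) + Real.sqrt ((k : ℝ) ^ 2 - 4)) / (2 * k))) ∧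
    (∀ p ∈ Set.Ioo (((k : ℝ) - Real.sqrt ((k : ℝ) ^ 2 - 4)) / (2 * k))
                   (((k : ℝ) + Real.sqrt ((k : ℝ) ^ 2 - 4)) / (2 * k)),
      ζ p ≤ ζ (1 / 2)) ∧
    (ζ (1 / 2) ∈ Set.Ioc (0 : ℝ) 1 ∧ ζ (1 / 2) = 1 - (1 - ζ (1 / 2) / 4) ^ (k ^ 2) ∧
      ∀ x ∈ Set.Ioc (0 : ℝ) 1, x = 1 - (1 - x / 4) ^ (k ^ 2) → x = ζ (1 / 2)) := by
  obtain ⟨hpc1, hpc1_half, hhalf_pc2, hpc2⟩ :=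
    criticalPoints_bounds (c := k) (by exact_mod_cast (by omega : 2 < k))
  have hn : 2 ≤ k ^ 2 := by nlinarith
  have hhalf := hζ (1 / 2) ⟨hpc1_half, hhalf_pc2⟩
  have hζ_lt : ∀ p ∈ Ioo _ _, ∀ p' ∈ Ioo _ _, p * (1 - p) < p' * (1 - p') → ζ p < ζ p' :=
    fun p hp p' hp' hpp' => lt_of_isFixedPt_treeSurvivalMap hn
      (by nlinarith [hpc1.trans hp.1, hp.2.trans hpc2]) hpp' (by nlinarith [sq_nonneg (p' - 1 / 2)]) (hζ p hp).1 (hζ p' hp').1 (hζ p hp).2.symm (hζ p' hp').2.symm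
  have hfix_quarter : ∀ x : ℝ, x = 1 - (1 - x / 4) ^ (k ^ 2) →
      IsFixedPt (treeSurvivalMap (k ^ 2) (1 / 4)) x := fun x hx => by
    rw [IsFixedPt, treeSurvivalMap, one_div_mul_eq_div, ← hx]
  refine ⟨fun p hp p' hp' hpp' => ?_, fun p hp p' hp' hpp' => ?_, fun p hp => ?_, ?_⟩
  · exact hζ_lt p ⟨hp.1, hp.2.trans_lt hhalf_pc2⟩ p' ⟨hp'.1, hp'.2.trans_lt hhalf_pc2⟩
      (by nlinarith [hp'.2])
  · exact hζ_lt p' ⟨hpc1_half.trans_le hp'.1, hp'.2⟩ p ⟨hpc1_half.trans_le hp.1, hp.2⟩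
      (by nlinarith [hp.1])
  · rcases eq_or_ne p (1 / 2) with rfl | hp_half
    · rfl
    · exact (hζ_lt p hp _ ⟨hpc1_half, hhalf_pc2⟩
        (by nlinarith [sq_pos_of_ne_zero (sub_ne_zero.2 hp_half)])).le
  · have hquarter : ζ (1 / 2) = 1 - (1 - ζ (1 / 2) / 4) ^ (k ^ 2) := by
      convert hhalf.2 using 4; ring
    exact ⟨hhalf.1, hquarter, fun x hx hxfix => eq_of_isFixedPt_treeSurvivalMap hn
      (by norm_num) (by norm_num) hx hhalf.1 (hfix_quarter x hxfix) (hfix_quarter _ hquarter)⟩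
end

section
/- Let k ≥ 2 be an integer. There exists a continuously differentiable function h : (1/k, 1) → (0,1) such that h(p) = 1 − (1 − p·h(p))^k for all p ∈ (1/k, 1). (The percolation function θ̂_k is differentiable away from the critical point 1/k.) -/
/-!
Write `S(u) = 1 + u + ⋯ + u^(k-1)`. The substitution `u = 1 - p x` turns the fixed-point equation
into `p = 1 / S(u)` with `x = 1 - u^k`, because `(1 - u) S(u) = 1 - u^k`. On `[0, 1]` the polynomial
`S` is smooth with derivative at least `1`, and runs from `S(0) = 1` to `S(1) = k`; so for
`p ∈ (1/k, 1)` the equation `S(u) = 1/p` has a unique root `u ∈ (0, 1)`, which depends smoothly on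
`p` by the inverse function theorem. Then `h(p) = 1 - u(p)^k`.
-/

open Set Topology

theorem ContDiffAt.of_local_left_inverse_of_injOn {𝕂 E F : Type*} [RCLike 𝕂]
    [NormedAddCommGroup E] [NormedSpace 𝕂 E] [CompleteSpace E]
    [NormedAddCommGroup F] [NormedSpace 𝕂 F]
    {f : E → F} {g : F → E} {f' : E ≃L[𝕂] F} {s : Set E} {a : E} {n : WithTop ℕ∞}
    (hf : ContDiffAt 𝕂 n f a) (hf' : HasFDerivAt f (f' : E →L[𝕂] F) a) (hn : n ≠ 0)
    (hs : s ∈ 𝓝 a) (hinj : InjOn f s) (hfg : ∀ᶠ y in 𝓝 (f a), g y ∈ s ∧ f (g y) = y) :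
    ContDiffAt 𝕂 n g (f a) := by
  have hstrict := hf.hasStrictFDerivAt' hf' hn
  have hloc_mem : ∀ᶠ y in 𝓝 (f a), hf.localInverse hf' hn y ∈ s :=
    hstrict.localInverse_continuousAt.eventually_mem
      (by rwa [hstrict.localInverse_apply_image])
  refine (hf.to_localInverse hf' hn).congr_of_eventuallyEq ?_
  filter_upwards [hfg, hloc_mem, hstrict.eventually_right_inverse] with y ⟨hgs, hfgy⟩ hls hfl
  exact hinj hgs hls (hfgy.trans hfl.symm)

noncomputable def geomSum (k : ℕ) (u : ℝ) : ℝ := ∑ i ∈ Finset.range k, u ^ i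

section geomSum

variable {k : ℕ}

theorem one_sub_mul_geomSum (u : ℝ) : (1 - u) * geomSum k u = 1 - u ^ k := by
  rw [geomSum, mul_comm, ← neg_sub, mul_neg, geom_sum_mul, neg_sub]

theorem mul_one_sub_pow_eq_of_geomSum_eq {p u : ℝ} (hp : p ≠ 0) (h : geomSum k u = p⁻¹) :
    p * (1 - u ^ k) = 1 - u := by
  rw [← one_sub_mul_geomSum, h, mul_left_comm, mul_inv_cancel₀ hp, mul_one]

theorem geomSum_zero (hk : k ≠ 0) : geomSum k 0 = 1 := by
  simp [geomSum, zero_pow_eq, Finset.sum_ite_eq', Nat.pos_of_ne_zero hk]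

theorem geomSum_one : geomSum k 1 = k := by simp [geomSum]

theorem contDiff_geomSum {n : WithTop ℕ∞} : ContDiff ℝ n (geomSum k) :=
  ContDiff.sum fun i _ => contDiff_id.pow i

theorem hasDerivAt_geomSum (u : ℝ) :
    HasDerivAt (geomSum k) (∑ i ∈ Finset.range k, (i : ℝ) * u ^ (i - 1)) u :=
  HasDerivAt.fun_sum fun i _ => hasDerivAt_pow i u

theorem one_le_sum_mul_pow (hk : 2 ≤ k) {u : ℝ} (hu : 0 ≤ u) :
    1 ≤ ∑ i ∈ Finset.range k, (i : ℝ) * u ^ (i - 1) := by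
  simpa using Finset.single_le_sum (f := fun i : ℕ => (i : ℝ) * u ^ (i - 1))
    (fun i _ => mul_nonneg i.cast_nonneg (pow_nonneg hu _)) (Finset.mem_range.2 hk)

theorem geomSum_strictMonoOn (hk : 2 ≤ k) : StrictMonoOn (geomSum k) (Ici 0) :=
  fun u hu v _ huv => Finset.sum_lt_sum (fun i _ => pow_le_pow_left₀ hu huv.le i)
    ⟨1, Finset.mem_range.2 hk, by simpa using huv⟩

noncomputable def invGeomSum (k : ℕ) (y : ℝ) : ℝ := Function.invFunOn (geomSum k) (Ioo 0 1) y

theorem invGeomSum_mem_Ioo_and_geomSum_eq (hk : 2 ≤ k) {y : ℝ} (hy : y ∈ Ioo 1 (k : ℝ)) :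
    invGeomSum k y ∈ Ioo 0 1 ∧ geomSum k (invGeomSum k y) = y := by
  have hivt := intermediate_value_Ioo zero_le_one
    (contDiff_geomSum (k := k) (n := 0)).continuous.continuousOn
  rw [geomSum_zero (by omega), geomSum_one] at hivt
  have hex : ∃ u ∈ Ioo (0 : ℝ) 1, geomSum k u = y := hivt hy
  exact ⟨Function.invFunOn_mem hex, Function.invFunOn_eq hex⟩

theorem contDiffAt_invGeomSum (hk : 2 ≤ k) {n : WithTop ℕ∞} (hn : n ≠ 0) {y : ℝ}
    (hy : y ∈ Ioo 1 (k : ℝ)) : ContDiffAt ℝ n (invGeomSum k) y := by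
  obtain ⟨hu, hSu⟩ := invGeomSum_mem_Ioo_and_geomSum_eq hk hy
  have hderiv_ne : ∑ i ∈ Finset.range k, (i : ℝ) * invGeomSum k y ^ (i - 1) ≠ 0 :=
    (one_pos.trans_le (one_le_sum_mul_pow hk hu.1.le)).ne'
  rw [← hSu]
  refine contDiff_geomSum.contDiffAt.of_local_left_inverse_of_injOn
    ((hasDerivAt_geomSum _).hasFDerivAt_equiv hderiv_ne) hn (isOpen_Ioo.mem_nhds hu)
    ((geomSum_strictMonoOn hk).injOn.mono fun _ hu => hu.1.le) ?_
  rw [hSu]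
  filter_upwards [isOpen_Ioo.mem_nhds hy] with z hz
  exact invGeomSum_mem_Ioo_and_geomSum_eq hk hz

end geomSum

theorem percolation_function_differentiable (k : ℕ) (hk : 2 ≤ k) :
    ∃ h : ℝ → ℝ, ContDiffOn ℝ 1 h (Set.Ioo (1 / (k : ℝ)) 1) ∧
      ∀ p ∈ Set.Ioo (1 / (k : ℝ)) 1,
        h p ∈ Set.Ioo (0 : ℝ) 1 ∧ h p = 1 - (1 - p * h p) ^ k := by
  have hk0 : (0 : ℝ) < k := by positivity
  have hp0 : ∀ p ∈ Ioo (1 / (k : ℝ)) 1, 0 < p := fun p hp => (one_div_pos.2 hk0).trans hp.1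
  have hinv_mem : ∀ p ∈ Ioo (1 / (k : ℝ)) 1, p⁻¹ ∈ Ioo 1 (k : ℝ) := fun p hp =>
    ⟨(one_lt_inv₀ (hp0 p hp)).2 hp.2, (inv_lt_comm₀ (hp0 p hp) hk0).2 (one_div (k : ℝ) ▸ hp.1)⟩
  refine ⟨fun p => 1 - invGeomSum k p⁻¹ ^ k, fun p hp => ?_, fun p hp => ?_⟩
  · exact (contDiffAt_const.sub (((contDiffAt_invGeomSum hk one_ne_zero (hinv_mem p hp)).comp p
      (contDiffAt_inv ℝ (hp0 p hp).ne')).pow k)).contDiffWithinAt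
  · obtain ⟨⟨hu0, hu1⟩, hSu⟩ := invGeomSum_mem_Ioo_and_geomSum_eq hk (hinv_mem p hp)
    set u := invGeomSum k p⁻¹
    have huk : u ^ k < 1 := pow_lt_one₀ hu0.le hu1 (by omega)
    refine ⟨⟨by linarith, by linarith [pow_pos hu0 k]⟩, ?_⟩
    rw [mul_one_sub_pow_eq_of_geomSum_eq (hp0 p hp).ne' hSu, sub_sub_cancel]
end
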